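/- Let 𝒳 be a finite set, let P0 be a probability mass function on 𝒳 with P0(x) > 0 for all x, and let {P_u}_{u∈V} be a nonempty family of probability mass functions on 𝒳 such that D* := inf_{u∈V} D(P_u‖P0) satisfies 0 < D* < ∞. Then for every ε > 0 there exists a sequence of decision sets A_n ⊆ 𝒳^n such that: (i) for all sufficiently large n, P_u^⊗n(𝒳^n \ A_n) ≤ ε for every u ∈ V simultaneously, and (ii) lim_{n→∞} (1/n) · log P0^⊗n(A_n) = −D*. (This is the composite-hypothesis form of the fingerprinting theorem: the family {P_u}_{u∈V} represents fingerprint distributions over a modified Voronoi region V̂_{v1} of a training point, P0 is the fingerprint distribution at a location u2 outside that region, and the test is based on the empirical distribution.) -/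
import Mathlib

set_option linter.unusedSectionVars false
set_option linter.unusedVariables false
set_option maxHeartbeats 2000000


open Filter Real

/-- Kullback–Leibler divergence between two pmfs on a finite set. -/
noncomputable def klDivergence {𝒳 : Type*} [Fintype 𝒳] (P Q : 𝒳 → ℝ) : ℝ :=
  ∑ x, if 0 < P x then P x * Real.log (P x / Q x) else 0

/-- Probability of a set of `n`-tuples under the `n`-fold product of the pmf `P`. -/
noncomputable def prodPMFProb {𝒳 : Type*} [Fintype 𝒳] (P : 𝒳 → ℝ) {n : ℕ}
    (A : Set (Fin n → 𝒳)) : ℝ :=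
  ∑ x : Fin n → 𝒳, A.indicator (fun y => ∏ i, P (y i)) x

namespace CS
open scoped Classical

variable {𝒳 : Type*} [Fintype 𝒳]

lemma sum_prod_eq {n : ℕ} (F : Fin n → 𝒳 → ℝ) :
    ∑ x : Fin n → 𝒳, ∏ i, F i (x i) = ∏ i, ∑ a, F i a := by
  rw [Finset.prod_univ_sum, Fintype.piFinset_univ]

lemma prodPMFProb_eq (P : 𝒳 → ℝ) {n : ℕ} (A : Set (Fin n → 𝒳)) :
    prodPMFProb P A = ∑ x : Fin n → 𝒳, if x ∈ A then ∏ i, P (x i) else 0 :=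
  Finset.sum_congr rfl fun x _ => Set.indicator_apply _ _ _

section Nonneg

variable {P : 𝒳 → ℝ} (hP : ∀ a, 0 ≤ P a)
include hP

lemma prodPMFProb_nonneg {n : ℕ} (A : Set (Fin n → 𝒳)) : 0 ≤ prodPMFProb P A := by
  rw [prodPMFProb_eq]
  refine Finset.sum_nonneg fun x _ => ?_
  by_cases hx : x ∈ A
  · rw [if_pos hx]; exact Finset.prod_nonneg fun i _ => hP _
  · rw [if_neg hx]

lemma prodPMFProb_mono {n : ℕ} {A B : Set (Fin n → 𝒳)} (hAB : A ⊆ B) :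
    prodPMFProb P A ≤ prodPMFProb P B := by
  rw [prodPMFProb_eq, prodPMFProb_eq]
  refine Finset.sum_le_sum fun x _ => ?_
  have hx0 : (0:ℝ) ≤ ∏ i, P (x i) := Finset.prod_nonneg fun i _ => hP _
  by_cases hx : x ∈ A
  · rw [if_pos hx, if_pos (hAB hx)]
  · rw [if_neg hx]
    by_cases hxB : x ∈ B
    · rw [if_pos hxB]; exact hx0
    · rw [if_neg hxB]

lemma prodPMFProb_union_le {n : ℕ} (A B : Set (Fin n → 𝒳)) :
    prodPMFProb P (A ∪ B) ≤ prodPMFProb P A + prodPMFProb P B := by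
  rw [prodPMFProb_eq, prodPMFProb_eq, prodPMFProb_eq, ← Finset.sum_add_distrib]
  refine Finset.sum_le_sum fun x _ => ?_
  have hx0 : (0:ℝ) ≤ ∏ i, P (x i) := Finset.prod_nonneg fun i _ => hP _
  by_cases hA : x ∈ A
  · rw [if_pos (Set.mem_union_left B hA), if_pos hA]
    by_cases hB : x ∈ B
    · rw [if_pos hB]; linarith
    · rw [if_neg hB]; linarith
  · by_cases hB : x ∈ B
    · rw [if_pos (Set.mem_union_right A hB), if_neg hA, if_pos hB]; linarith
    · rw [if_neg (by simp [hA, hB] : ¬ x ∈ A ∪ B), if_neg hA, if_neg hB]; norm_num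

lemma sum_prod_self (hP1 : ∑ a, P a = 1) {n : ℕ} :
    ∑ x : Fin n → 𝒳, ∏ i, P (x i) = 1 := by
  rw [sum_prod_eq fun _ => P]
  simp [hP1]

lemma prodPMFProb_univ (hP1 : ∑ a, P a = 1) {n : ℕ} :
    prodPMFProb P (Set.univ : Set (Fin n → 𝒳)) = 1 := by
  refine (Finset.sum_congr rfl fun x _ => Set.indicator_of_mem (Set.mem_univ x) _).trans
    (sum_prod_self hP hP1)

lemma prodPMFProb_compl (hP1 : ∑ a, P a = 1) {n : ℕ} (A : Set (Fin n → 𝒳)) :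
    prodPMFProb P Aᶜ = 1 - prodPMFProb P A := by
  have h : ∀ x : Fin n → 𝒳, Aᶜ.indicator (fun y => ∏ i, P (y i)) x
      = (∏ i, P (x i)) - A.indicator (fun y => ∏ i, P (y i)) x := by
    intro x
    by_cases hx : x ∈ A
    · rw [Set.indicator_of_notMem (by simpa using hx), Set.indicator_of_mem hx]; ring
    · rw [Set.indicator_of_mem (by simpa using hx), Set.indicator_of_notMem hx]; ring
  show ∑ x : Fin n → 𝒳, Aᶜ.indicator (fun y => ∏ i, P (y i)) x = 1 - prodPMFProb P A
  refine (Finset.sum_congr rfl fun x _ => h x).trans ?_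
  rw [Finset.sum_sub_distrib, sum_prod_self hP hP1]
  rfl

/-- expectation of the square of a centered sum of iid terms. -/
lemma expectation_sq (hP1 : ∑ a, P a = 1) (g : 𝒳 → ℝ) (hg : ∑ a, P a * g a = 0) (n : ℕ) :
    ∑ x : Fin n → 𝒳, (∏ i, P (x i)) * (∑ i, g (x i))^2
      = n * ∑ a, P a * (g a)^2 := by
  have key : ∀ j k : Fin n, ∑ x : Fin n → 𝒳, (∏ i, P (x i)) * (g (x j) * g (x k))
      = if j = k then ∑ a, P a * (g a)^2 else 0 := by
    intro j k
    by_cases hjk : j = k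
    · subst hjk
      have h1 : ∀ x : Fin n → 𝒳, (∏ i, P (x i)) * (g (x j) * g (x j))
          = ∏ i, (P (x i) * (if i = j then g (x i) * g (x i) else 1)) := by
        intro x
        rw [Finset.prod_mul_distrib, Finset.prod_ite_eq' Finset.univ j
          (fun i => g (x i) * g (x i))]
        simp
      rw [Finset.sum_congr rfl fun x _ => h1 x,
        sum_prod_eq (fun i a => P a * (if i = j then g a * g a else 1))]
      have h2 : ∀ i : Fin n, ∑ a, P a * (if i = j then g a * g a else 1)
          = if i = j then ∑ a, P a * (g a)^2 else 1 := by
        intro i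
        by_cases hij : i = j
        · subst hij
          rw [if_pos rfl]
          exact Finset.sum_congr rfl fun a _ => by rw [if_pos rfl]; ring
        · rw [if_neg hij]
          exact (Finset.sum_congr rfl fun a _ => by rw [if_neg hij, mul_one]).trans hP1
      rw [Finset.prod_congr rfl fun i _ => h2 i,
        Finset.prod_ite_eq' Finset.univ j (fun _ => ∑ a, P a * (g a)^2)]
      simp
    · have h1 : ∀ x : Fin n → 𝒳, (∏ i, P (x i)) * (g (x j) * g (x k))
          = ∏ i, (P (x i) * ((if i = j then g (x i) else 1) * (if i = k then g (x i) else 1))) := by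
        intro x
        rw [Finset.prod_mul_distrib, Finset.prod_mul_distrib,
          Finset.prod_ite_eq' Finset.univ j (fun i => g (x i)),
          Finset.prod_ite_eq' Finset.univ k (fun i => g (x i))]
        simp [mul_assoc]
      rw [Finset.sum_congr rfl fun x _ => h1 x,
        sum_prod_eq (fun i a => P a * ((if i = j then g a else 1) * (if i = k then g a else 1)))]
      rw [if_neg hjk]
      refine Finset.prod_eq_zero (Finset.mem_univ j) ?_
      have : ∀ a : 𝒳, P a * ((if j = j then g a else 1) * (if j = k then g a else 1))
          = P a * g a := by intro a; simp [hjk]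
      rw [Finset.sum_congr rfl fun a _ => this a, hg]
  calc ∑ x : Fin n → 𝒳, (∏ i, P (x i)) * (∑ i, g (x i))^2
      = ∑ x : Fin n → 𝒳, ∑ j, ∑ k, (∏ i, P (x i)) * (g (x j) * g (x k)) := by
        refine Finset.sum_congr rfl fun x _ => ?_
        rw [sq, Finset.sum_mul_sum, Finset.mul_sum]
        exact Finset.sum_congr rfl fun j _ => by rw [Finset.mul_sum]
    _ = ∑ j, ∑ k, ∑ x : Fin n → 𝒳, (∏ i, P (x i)) * (g (x j) * g (x k)) := by
        rw [Finset.sum_comm]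
        exact Finset.sum_congr rfl fun j _ => Finset.sum_comm
    _ = ∑ j : Fin n, ∑ k : Fin n, if j = k then ∑ a, P a * (g a)^2 else 0 :=
        Finset.sum_congr rfl fun j _ => Finset.sum_congr rfl fun k _ => key j k
    _ = n * ∑ a, P a * (g a)^2 := by
        simp [Finset.sum_ite_eq Finset.univ, Finset.card_univ]

lemma chebyshev (hP1 : ∑ a, P a = 1) (f : 𝒳 → ℝ) (μ : ℝ) (hμ : ∑ a, P a * f a = μ)
    (n : ℕ) (t : ℝ) (ht : 0 < t) :
    prodPMFProb P {x : Fin n → 𝒳 | t ≤ |(∑ i, f (x i)) - n * μ|}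
      ≤ ((n : ℝ) * ∑ a, P a * (f a - μ)^2) / t^2 := by
  set g : 𝒳 → ℝ := fun a => f a - μ with hgdef
  have hg : ∑ a, P a * g a = 0 := by
    simp only [hgdef, mul_sub]
    rw [Finset.sum_sub_distrib, hμ, ← Finset.sum_mul, hP1]
    ring
  have hsum : ∀ x : Fin n → 𝒳, ∑ i, g (x i) = (∑ i, f (x i)) - n * μ := by
    intro x
    simp only [hgdef]
    rw [Finset.sum_sub_distrib, Finset.sum_const, Finset.card_univ]
    simp [nsmul_eq_mul]
  rw [prodPMFProb_eq]
  have hbound : ∀ x : Fin n → 𝒳,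
      (if x ∈ {x : Fin n → 𝒳 | t ≤ |(∑ i, f (x i)) - n * μ|} then ∏ i, P (x i) else 0)
        ≤ (∏ i, P (x i)) * (∑ i, g (x i))^2 / t^2 := by
    intro x
    have hx0 : (0:ℝ) ≤ ∏ i, P (x i) := Finset.prod_nonneg fun i _ => hP _
    by_cases hx : x ∈ {x : Fin n → 𝒳 | t ≤ |(∑ i, f (x i)) - n * μ|}
    · rw [if_pos hx]
      have habs : t ≤ |(∑ i, f (x i)) - n * μ| := hx
      have h1 : t^2 ≤ (∑ i, g (x i))^2 := by
        calc t^2 ≤ |(∑ i, f (x i)) - n * μ|^2 := pow_le_pow_left₀ ht.le habs 2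
          _ = ((∑ i, f (x i)) - n * μ)^2 := sq_abs _
          _ = (∑ i, g (x i))^2 := by rw [hsum x]
      rw [le_div_iff₀ (by positivity : (0:ℝ) < t^2)]
      exact mul_le_mul_of_nonneg_left h1 hx0
    · rw [if_neg hx]
      positivity
  calc (∑ x : Fin n → 𝒳, if x ∈ {x : Fin n → 𝒳 | t ≤ |(∑ i, f (x i)) - n * μ|}
        then ∏ i, P (x i) else 0)
      ≤ ∑ x : Fin n → 𝒳, (∏ i, P (x i)) * (∑ i, g (x i))^2 / t^2 :=
        Finset.sum_le_sum fun x _ => hbound x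
    _ = (∑ x : Fin n → 𝒳, (∏ i, P (x i)) * (∑ i, g (x i))^2) / t^2 := by
        rw [Finset.sum_div]
    _ = ((n : ℝ) * ∑ a, P a * (g a)^2) / t^2 := by
        rw [expectation_sq hP hP1 g hg n]
    _ = _ := rfl

end Nonneg

section Counting

variable [DecidableEq 𝒳]

def cnt {n : ℕ} (x : Fin n → 𝒳) (a : 𝒳) : ℕ := (Finset.univ.filter fun i => x i = a).card

lemma cnt_pos_iff {n : ℕ} (x : Fin n → 𝒳) (a : 𝒳) : 0 < cnt x a ↔ ∃ i, x i = a := by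
  simp [cnt, Finset.card_pos, Finset.filter_nonempty_iff]

lemma cnt_le {n : ℕ} (x : Fin n → 𝒳) (a : 𝒳) : cnt x a ≤ n := by
  simpa [cnt] using (Finset.card_filter_le Finset.univ fun i => x i = a)

lemma sum_cnt {n : ℕ} (x : Fin n → 𝒳) : ∑ a, cnt x a = n := by
  simpa [cnt] using Finset.sum_card_fiberwise_eq_card_filter Finset.univ Finset.univ x

lemma sum_comp_cnt {n : ℕ} (x : Fin n → 𝒳) (g : 𝒳 → ℝ) :
    ∑ i, g (x i) = ∑ a, (cnt x a : ℝ) * g a := by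
  rw [← Finset.sum_fiberwise_of_maps_to (fun i _ => Finset.mem_univ (x i)) (fun i => g (x i))]
  refine Finset.sum_congr rfl fun a _ => ?_
  rw [Finset.sum_congr rfl (fun i hi => by rw [(Finset.mem_filter.1 hi).2]),
    Finset.sum_const, nsmul_eq_mul]
  rfl

lemma prod_comp_cnt {n : ℕ} (x : Fin n → 𝒳) (g : 𝒳 → ℝ) :
    ∏ i, g (x i) = ∏ a, g a ^ cnt x a := by
  rw [← Finset.prod_fiberwise_of_maps_to (fun i _ => Finset.mem_univ (x i)) (fun i => g (x i))]
  refine Finset.prod_congr rfl fun a _ => ?_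
  rw [Finset.prod_congr rfl (fun i hi => by rw [(Finset.mem_filter.1 hi).2]),
    Finset.prod_const]
  rfl

/-- `n` times the KL divergence of the empirical distribution of `x` from `P0`. -/
noncomputable def LL (P0 : 𝒳 → ℝ) {n : ℕ} (x : Fin n → 𝒳) : ℝ :=
  ∑ a, if 0 < cnt x a then (cnt x a : ℝ) * Real.log (cnt x a / (n * P0 a)) else 0

end Counting

/-- the log-likelihood-ratio function of `Q` against `P0` (extended by `0`). -/
noncomputable def fE (Q P0 : 𝒳 → ℝ) (a : 𝒳) : ℝ :=
  if 0 < Q a then Real.log (Q a / P0 a) else 0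

lemma mean_fE (Q P0 : 𝒳 → ℝ) : ∑ a, Q a * fE Q P0 a = klDivergence Q P0 := by
  refine Finset.sum_congr rfl fun a _ => ?_
  by_cases h : 0 < Q a
  · rw [fE, if_pos h, if_pos h]
  · rw [fE, if_neg h, if_neg h, mul_zero]

lemma klDivergence_nonneg (Q P0 : 𝒳 → ℝ) (hQ0 : ∀ a, 0 ≤ Q a) (hQ1 : ∑ a, Q a = 1)
    (hP0 : ∀ a, 0 < P0 a) (hP01 : ∑ a, P0 a = 1) : 0 ≤ klDivergence Q P0 := by
  have hterm : ∀ a : 𝒳, Q a - P0 a ≤ (if 0 < Q a then Q a * Real.log (Q a / P0 a) else 0) := by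
    intro a
    by_cases h : 0 < Q a
    · rw [if_pos h]
      have hr : (0:ℝ) < P0 a / Q a := div_pos (hP0 a) h
      have hlog := Real.log_le_sub_one_of_pos hr
      have hinv : Real.log (P0 a / Q a) = - Real.log (Q a / P0 a) := by
        rw [← Real.log_inv, inv_div]
      rw [hinv] at hlog
      have := mul_le_mul_of_nonneg_left hlog h.le
      have h2 : Q a * (P0 a / Q a - 1) = P0 a - Q a := by field_simp
      nlinarith
    · rw [if_neg h]
      have : Q a = 0 := le_antisymm (not_lt.1 h) (hQ0 a)
      rw [this]
      linarith [(hP0 a).le]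
  calc (0:ℝ) = (∑ a, Q a) - ∑ a, P0 a := by rw [hQ1, hP01]; ring
    _ = ∑ a, (Q a - P0 a) := by rw [Finset.sum_sub_distrib]
    _ ≤ _ := Finset.sum_le_sum fun a _ => hterm a

lemma mul_log_sq_le {x : ℝ} (hx : 0 < x) (hx1 : x ≤ 1) : x * (Real.log x)^2 ≤ 4 := by
  set s := Real.sqrt x with hs
  have hs0 : 0 < s := Real.sqrt_pos.2 hx
  have hs1 : s ≤ 1 := by
    rw [hs, show (1:ℝ) = Real.sqrt 1 by rw [Real.sqrt_one]]
    exact Real.sqrt_le_sqrt hx1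
  have hss : s * s = x := Real.mul_self_sqrt hx.le
  have hlog : Real.log x = 2 * Real.log s := by
    rw [← hss, Real.log_mul hs0.ne' hs0.ne']; ring
  have habs := Real.abs_log_mul_self_lt s hs0 hs1
  have h2 : (Real.log s * s)^2 ≤ 1 := by
    rw [← sq_abs]
    nlinarith [abs_nonneg (Real.log s * s)]
  calc x * (Real.log x)^2 = 4 * (Real.log s * s)^2 := by rw [hlog, ← hss]; ring
    _ ≤ 4 * 1 := by linarith
    _ = 4 := by ring

/-- uniform bound on the variance of the log-likelihood ratio. -/
lemma var_fE_le (Q P0 : 𝒳 → ℝ) (hQ0 : ∀ a, 0 ≤ Q a) (hQ1 : ∑ a, Q a = 1)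
    (hP0 : ∀ a, 0 < P0 a) (μ : ℝ) (hμ : ∑ a, Q a * fE Q P0 a = μ) :
    ∑ a, Q a * (fE Q P0 a - μ)^2 ≤ ∑ a, (8 + 2 * (Real.log (P0 a))^2) := by
  have hQle1 : ∀ a, Q a ≤ 1 := by
    intro a
    rw [← hQ1]
    exact Finset.single_le_sum (fun b _ => hQ0 b) (Finset.mem_univ a)
  have hexp : ∑ a, Q a * (fE Q P0 a - μ)^2 = (∑ a, Q a * (fE Q P0 a)^2) - μ^2 := by
    have : ∀ a : 𝒳, Q a * (fE Q P0 a - μ)^2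
        = Q a * (fE Q P0 a)^2 - 2 * μ * (Q a * fE Q P0 a) + μ^2 * Q a := by
      intro a; ring
    rw [Finset.sum_congr rfl fun a _ => this a, Finset.sum_add_distrib,
      Finset.sum_sub_distrib, ← Finset.mul_sum, ← Finset.mul_sum, hμ, hQ1]
    ring
  have hterm : ∀ a : 𝒳, Q a * (fE Q P0 a)^2 ≤ 8 + 2 * (Real.log (P0 a))^2 := by
    intro a
    by_cases h : 0 < Q a
    · rw [fE, if_pos h, Real.log_div h.ne' (hP0 a).ne']
      have h1 : Q a * (Real.log (Q a) - Real.log (P0 a))^2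
          ≤ 2 * (Q a * (Real.log (Q a))^2) + 2 * (Q a * (Real.log (P0 a))^2) := by
        nlinarith [sq_nonneg (Real.log (Q a) + Real.log (P0 a)), h.le]
      have h2 : Q a * (Real.log (Q a))^2 ≤ 4 := mul_log_sq_le h (hQle1 a)
      have h3 : Q a * (Real.log (P0 a))^2 ≤ (Real.log (P0 a))^2 := by
        nlinarith [sq_nonneg (Real.log (P0 a)), hQle1 a, h.le]
      linarith
    · rw [fE, if_neg h]
      have hq : Q a = 0 := le_antisymm (not_lt.1 h) (hQ0 a)
      rw [hq]
      nlinarith [sq_nonneg (Real.log (P0 a))]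
  calc ∑ a, Q a * (fE Q P0 a - μ)^2 ≤ ∑ a, Q a * (fE Q P0 a)^2 := by
        rw [hexp]; nlinarith [sq_nonneg μ]
    _ ≤ _ := Finset.sum_le_sum fun a _ => hterm a

section Gibbs

variable [DecidableEq 𝒳]

/-- Gibbs inequality: the empirical log-likelihood sum is at most `n` times the
empirical KL divergence from `P0`. -/
lemma sum_fE_le_LL (P0 Q : 𝒳 → ℝ) (hP0 : ∀ a, 0 < P0 a) (hQ0 : ∀ a, 0 ≤ Q a)
    (hQ1 : ∑ a, Q a = 1) {n : ℕ} (x : Fin n → 𝒳) (hx : ∀ i, 0 < Q (x i)) :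
    ∑ i, fE Q P0 (x i) ≤ LL P0 x := by
  rw [sum_comp_cnt x (fE Q P0)]
  have hterm : ∀ a : 𝒳,
      (if 0 < cnt x a then (cnt x a : ℝ) * Real.log (cnt x a / (n * P0 a)) else 0)
        - (cnt x a : ℝ) * fE Q P0 a
      = (if 0 < cnt x a then (cnt x a : ℝ) * Real.log (cnt x a / (n * Q a)) else 0) := by
    intro a
    by_cases hc : 0 < cnt x a
    · have hQa : 0 < Q a := by
        obtain ⟨i, hi⟩ := (cnt_pos_iff x a).1 hc
        exact hi ▸ hx i
      have hn : 0 < n := lt_of_lt_of_le hc (cnt_le x a)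
      have hcR : (0:ℝ) < (cnt x a : ℝ) := Nat.cast_pos.2 hc
      have hnR : (0:ℝ) < (n : ℝ) := Nat.cast_pos.2 hn
      rw [if_pos hc, if_pos hc, fE, if_pos hQa, ← mul_sub]
      congr 1
      rw [Real.log_div (ne_of_gt hcR) (mul_pos hnR (hP0 a)).ne', Real.log_div (ne_of_gt hQa)
        (ne_of_gt (hP0 a)), Real.log_div (ne_of_gt hcR) (mul_pos hnR hQa).ne',
        Real.log_mul (ne_of_gt hnR) (ne_of_gt (hP0 a)),
        Real.log_mul (ne_of_gt hnR) (ne_of_gt hQa)]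
      ring
    · have hc0 : cnt x a = 0 := Nat.eq_zero_of_not_pos hc
      simp [hc0]
  have hGibbs : (0:ℝ) ≤ ∑ a, (if 0 < cnt x a then (cnt x a : ℝ)
      * Real.log (cnt x a / (n * Q a)) else 0) := by
    have hlow : ∀ a : 𝒳,
        (if 0 < cnt x a then ((cnt x a : ℝ) - n * Q a) else 0)
          ≤ (if 0 < cnt x a then (cnt x a : ℝ) * Real.log (cnt x a / (n * Q a)) else 0) := by
      intro a
      by_cases hc : 0 < cnt x a
      · rw [if_pos hc, if_pos hc]
        have hQa : 0 < Q a := by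
          obtain ⟨i, hi⟩ := (cnt_pos_iff x a).1 hc
          exact hi ▸ hx i
        have hn : 0 < n := lt_of_lt_of_le hc (cnt_le x a)
        have hcR : (0:ℝ) < (cnt x a : ℝ) := Nat.cast_pos.2 hc
        have hnR : (0:ℝ) < (n : ℝ) := Nat.cast_pos.2 hn
        have hratio : (0:ℝ) < (n * Q a) / (cnt x a : ℝ) := by positivity
        have hlog := Real.log_le_sub_one_of_pos hratio
        have hloginv : Real.log ((n * Q a) / (cnt x a : ℝ))
            = - Real.log ((cnt x a : ℝ) / (n * Q a)) := by
          rw [← Real.log_inv, inv_div]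
        rw [hloginv] at hlog
        have := mul_le_mul_of_nonneg_left hlog hcR.le
        have h2 : (cnt x a : ℝ) * ((n * Q a) / (cnt x a : ℝ) - 1) = n * Q a - cnt x a := by
          field_simp
        nlinarith
      · rw [if_neg hc, if_neg hc]
    calc (0:ℝ) = (n : ℝ) - n * 1 := by ring
      _ ≤ ∑ a, (if 0 < cnt x a then ((cnt x a : ℝ) - n * Q a) else 0) := by
          have e1 : ∑ a, (if 0 < cnt x a then ((cnt x a : ℝ) - n * Q a) else 0)
              = (∑ a, (cnt x a : ℝ)) - ∑ a, (if 0 < cnt x a then (n : ℝ) * Q a else 0) := by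
            rw [← Finset.sum_sub_distrib]
            refine Finset.sum_congr rfl fun a _ => ?_
            by_cases hc : 0 < cnt x a
            · rw [if_pos hc, if_pos hc]
            · rw [if_neg hc, if_neg hc, Nat.eq_zero_of_not_pos hc]
              simp
          have e2 : (∑ a, (cnt x a : ℝ)) = (n : ℝ) := by
            rw [← Nat.cast_sum]
            exact_mod_cast congrArg (Nat.cast : ℕ → ℝ) (sum_cnt x)
          have e3 : ∑ a, (if 0 < cnt x a then (n : ℝ) * Q a else 0) ≤ (n : ℝ) * 1 := by
            calc ∑ a, (if 0 < cnt x a then (n : ℝ) * Q a else 0)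
                ≤ ∑ a, (n : ℝ) * Q a := by
                  refine Finset.sum_le_sum fun a _ => ?_
                  by_cases hc : 0 < cnt x a
                  · rw [if_pos hc]
                  · rw [if_neg hc]
                    exact mul_nonneg (Nat.cast_nonneg n) (hQ0 a)
              _ = (n : ℝ) * 1 := by rw [← Finset.mul_sum, hQ1]
          rw [e1, e2]
          linarith
      _ ≤ _ := Finset.sum_le_sum fun a _ => hlow a
  have : LL P0 x - ∑ a, (cnt x a : ℝ) * fE Q P0 a
      = ∑ a, (if 0 < cnt x a then (cnt x a : ℝ) * Real.log (cnt x a / (n * Q a)) else 0) := by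
    rw [LL, ← Finset.sum_sub_distrib]
    exact Finset.sum_congr rfl fun a _ => hterm a
  linarith [hGibbs.trans_eq this.symm]

/-- exact change-of-measure identity for the product probability of `x` under `P0`. -/
lemma prod_P0_eq (P0 : 𝒳 → ℝ) (hP0 : ∀ a, 0 < P0 a) {n : ℕ} (x : Fin n → 𝒳) :
    ∏ i, P0 (x i) = Real.exp (-(LL P0 x)) * ∏ a, ((cnt x a : ℝ) / n) ^ (cnt x a) := by
  rw [prod_comp_cnt x P0, LL, ← Finset.sum_neg_distrib, Real.exp_sum, ← Finset.prod_mul_distrib]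
  refine Finset.prod_congr rfl fun a _ => ?_
  by_cases hc : 0 < cnt x a
  · have hn : 0 < n := lt_of_lt_of_le hc (cnt_le x a)
    have hcR : (0:ℝ) < (cnt x a : ℝ) := Nat.cast_pos.2 hc
    have hnR : (0:ℝ) < (n : ℝ) := Nat.cast_pos.2 hn
    rw [if_pos hc]
    have hr : (0:ℝ) < (cnt x a : ℝ) / (n * P0 a) := div_pos hcR (mul_pos hnR (hP0 a))
    have h1 : -((cnt x a : ℝ) * Real.log ((cnt x a : ℝ) / (n * P0 a)))
        = (cnt x a : ℝ) * Real.log (((cnt x a : ℝ) / (n * P0 a))⁻¹) := by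
      rw [Real.log_inv]; ring
    rw [h1, Real.exp_nat_mul, Real.exp_log (inv_pos.2 hr), ← mul_pow]
    congr 1
    field_simp
  · have hc0 : cnt x a = 0 := Nat.eq_zero_of_not_pos hc
    simp [hc0]

/-- change-of-measure identity against an auxiliary pmf `Q` positive on the coordinates. -/
lemma prod_P0_change (P0 Q : 𝒳 → ℝ) (hP0 : ∀ a, 0 < P0 a) {n : ℕ} (x : Fin n → 𝒳)
    (hx : ∀ i, 0 < Q (x i)) :
    ∏ i, P0 (x i) = (∏ i, Q (x i)) * Real.exp (-(∑ i, fE Q P0 (x i))) := by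
  rw [← Finset.sum_neg_distrib, Real.exp_sum, ← Finset.prod_mul_distrib]
  refine Finset.prod_congr rfl fun i _ => ?_
  rw [fE, if_pos (hx i)]
  have h1 : -Real.log (Q (x i) / P0 (x i)) = Real.log (P0 (x i) / Q (x i)) := by
    rw [← Real.log_inv, inv_div]
  rw [h1, Real.exp_log (div_pos (hP0 _) (hx i)), mul_comm]
  exact (div_mul_cancel₀ (P0 (x i)) (ne_of_gt (hx i))).symm

/-- the number of possible empirical types is polynomial in `n`. -/
lemma count_sum_le {n : ℕ} (hn : 0 < n) :
    ∑ x : Fin n → 𝒳, ∏ a, ((cnt x a : ℝ) / n) ^ (cnt x a)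
      ≤ ((n : ℝ) + 1) ^ (Fintype.card 𝒳) := by
  classical
  have h1 : ∑ x : Fin n → 𝒳, ∏ a, ((cnt x a : ℝ) / n) ^ (cnt x a)
      = ∑ c ∈ Finset.univ.image (fun x : Fin n → 𝒳 => cnt x),
          (Finset.univ.filter fun x : Fin n → 𝒳 => cnt x = c).card
            • ∏ a, ((c a : ℝ) / n) ^ (c a) :=
    Finset.sum_comp (fun c : 𝒳 → ℕ => ∏ a, ((c a : ℝ) / n) ^ (c a)) (fun x => cnt x)
  rw [h1]
  have h2 : ∀ c ∈ Finset.univ.image (fun x : Fin n → 𝒳 => cnt x),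
      (Finset.univ.filter fun x : Fin n → 𝒳 => cnt x = c).card
        • ∏ a, ((c a : ℝ) / n) ^ (c a) ≤ 1 := by
    intro c hc
    obtain ⟨x₀, _, hx₀⟩ := Finset.mem_image.1 hc
    have hT1 : ∑ a, ((c a : ℝ) / n) = 1 := by
      rw [← Finset.sum_div, ← Nat.cast_sum, ← hx₀, sum_cnt x₀]
      field_simp
    have key : (Finset.univ.filter fun x : Fin n → 𝒳 => cnt x = c).card
        • ∏ a, ((c a : ℝ) / n) ^ (c a)
        = ∑ x ∈ Finset.univ.filter (fun x : Fin n → 𝒳 => cnt x = c),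
            ∏ i, ((c (x i) : ℝ) / n) := by
      refine Eq.symm ?_
      calc ∑ x ∈ Finset.univ.filter (fun x : Fin n → 𝒳 => cnt x = c),
            ∏ i, ((c (x i) : ℝ) / n)
          = ∑ _x ∈ Finset.univ.filter (fun x : Fin n → 𝒳 => cnt x = c),
              ∏ a, ((c a : ℝ) / n) ^ (c a) := by
            refine Finset.sum_congr rfl fun x hxf => ?_
            rw [prod_comp_cnt x (fun a => (c a : ℝ) / n)]
            rw [(Finset.mem_filter.1 hxf).2]
        _ = _ := Finset.sum_const _
    rw [key]
    calc ∑ x ∈ Finset.univ.filter (fun x : Fin n → 𝒳 => cnt x = c), ∏ i, ((c (x i) : ℝ) / n)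
        ≤ ∑ x : Fin n → 𝒳, ∏ i, ((c (x i) : ℝ) / n) := by
          refine Finset.sum_le_sum_of_subset_of_nonneg (Finset.filter_subset _ _)
            fun x _ _ => Finset.prod_nonneg fun i _ => by positivity
      _ = ∏ _i : Fin n, ∑ a, ((c a : ℝ) / n) := sum_prod_eq fun _ a => (c a : ℝ) / n
      _ = 1 := by rw [Finset.prod_congr rfl fun i _ => hT1]; simp
  have h3 : (Finset.univ.image (fun x : Fin n → 𝒳 => cnt x)).card
      ≤ (n + 1) ^ (Fintype.card 𝒳) := by
    have hle : ∀ c ∈ Finset.univ.image (fun x : Fin n → 𝒳 => cnt x), ∀ a, c a ≤ n := by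
      intro c hc a
      obtain ⟨x₀, _, hx₀⟩ := Finset.mem_image.1 hc
      exact hx₀ ▸ cnt_le x₀ a
    have hinj : (Finset.univ.image (fun x : Fin n → 𝒳 => cnt x)).card
        ≤ (Finset.univ : Finset (𝒳 → Fin (n+1))).card := by
      refine Finset.card_le_card_of_injOn
        (fun (c : 𝒳 → ℕ) (a : 𝒳) => (⟨min (c a) n, by omega⟩ : Fin (n+1)))
        (fun c _ => Finset.mem_univ _) ?_
      intro c1 hc1 c2 hc2 hEq
      funext a
      have h1 : min (c1 a) n = min (c2 a) n := by
        have := congrFun hEq a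
        simpa [Fin.mk.injEq] using this
      have e1 := hle c1 hc1 a
      have e2 := hle c2 hc2 a
      omega
    calc (Finset.univ.image (fun x : Fin n → 𝒳 => cnt x)).card
        ≤ (Finset.univ : Finset (𝒳 → Fin (n+1))).card := hinj
      _ = (n + 1) ^ (Fintype.card 𝒳) := by
          rw [Finset.card_univ, Fintype.card_fun]
          simp
  calc ∑ c ∈ Finset.univ.image (fun x : Fin n → 𝒳 => cnt x),
        (Finset.univ.filter fun x : Fin n → 𝒳 => cnt x = c).card
          • ∏ a, ((c a : ℝ) / n) ^ (c a)
      ≤ ∑ _c ∈ Finset.univ.image (fun x : Fin n → 𝒳 => cnt x), (1:ℝ) :=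
        Finset.sum_le_sum h2
    _ = (Finset.univ.image (fun x : Fin n → 𝒳 => cnt x)).card := by simp
    _ ≤ ((n : ℝ) + 1) ^ (Fintype.card 𝒳) := by
        calc ((Finset.univ.image (fun x : Fin n → 𝒳 => cnt x)).card : ℝ)
            ≤ (((n + 1) ^ (Fintype.card 𝒳) : ℕ) : ℝ) := by exact_mod_cast h3
          _ = ((n : ℝ) + 1) ^ (Fintype.card 𝒳) := by push_cast; ring

end Gibbs

/-- uniform tail bound for the deviation of the empirical log-likelihood. -/
lemma tail_bound (Q P0 : 𝒳 → ℝ) (hQ0 : ∀ a, 0 ≤ Q a) (hQ1 : ∑ a, Q a = 1)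
    (n : ℕ) (t : ℝ) (ht : 0 < t) :
    prodPMFProb Q {x : Fin n → 𝒳 | ¬ ((∀ i, 0 < Q (x i))
        ∧ |(∑ i, fE Q P0 (x i)) - n * klDivergence Q P0| ≤ t)}
      ≤ ((n : ℝ) * ∑ a, Q a * (fE Q P0 a - klDivergence Q P0)^2) / t^2 := by
  have hmono : {x : Fin n → 𝒳 | ¬ ((∀ i, 0 < Q (x i))
        ∧ |(∑ i, fE Q P0 (x i)) - n * klDivergence Q P0| ≤ t)}
      ⊆ {x : Fin n → 𝒳 | ¬ ∀ i, 0 < Q (x i)}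
        ∪ {x : Fin n → 𝒳 | t ≤ |(∑ i, fE Q P0 (x i)) - n * klDivergence Q P0|} := by
    intro x hx
    rcases not_and_or.1 hx with h | h
    · exact Or.inl h
    · exact Or.inr (not_le.1 h).le
  have hzero : prodPMFProb Q {x : Fin n → 𝒳 | ¬ ∀ i, 0 < Q (x i)} = 0 := by
    rw [prodPMFProb_eq]
    refine Finset.sum_eq_zero fun x _ => ?_
    by_cases hx : x ∈ {x : Fin n → 𝒳 | ¬ ∀ i, 0 < Q (x i)}
    · rw [if_pos hx]
      obtain ⟨i, hi⟩ := not_forall.1 hx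
      exact Finset.prod_eq_zero (Finset.mem_univ i) (le_antisymm (not_lt.1 hi) (hQ0 _))
    · rw [if_neg hx]
  calc prodPMFProb Q {x : Fin n → 𝒳 | ¬ ((∀ i, 0 < Q (x i))
        ∧ |(∑ i, fE Q P0 (x i)) - n * klDivergence Q P0| ≤ t)}
      ≤ prodPMFProb Q ({x : Fin n → 𝒳 | ¬ ∀ i, 0 < Q (x i)}
        ∪ {x : Fin n → 𝒳 | t ≤ |(∑ i, fE Q P0 (x i)) - n * klDivergence Q P0|}) :=
        prodPMFProb_mono hQ0 hmono
    _ ≤ prodPMFProb Q {x : Fin n → 𝒳 | ¬ ∀ i, 0 < Q (x i)}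
        + prodPMFProb Q {x : Fin n → 𝒳 |
            t ≤ |(∑ i, fE Q P0 (x i)) - n * klDivergence Q P0|} :=
        prodPMFProb_union_le hQ0 _ _
    _ ≤ 0 + ((n : ℝ) * ∑ a, Q a * (fE Q P0 a - klDivergence Q P0)^2) / t^2 := by
        rw [hzero]
        exact add_le_add le_rfl
          (chebyshev hQ0 hQ1 (fE Q P0) (klDivergence Q P0) (mean_fE Q P0) n t ht)
    _ = _ := zero_add _

end CS

/-- **Composite-hypothesis Stein lemma for fingerprinting with training grids.**
For a nonempty family `{P u}` of pmfs (fingerprint distributions over a modified Voronoi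
region) and an everywhere-positive pmf `P0` (the fingerprint distribution outside it)
with `0 < D* = ⨅ u, D(P u‖P0)`, there are decision sets `A n` whose missed-detection
probability is eventually `≤ ε` uniformly over the family and whose false-alarm
probability decays exponentially with exponent exactly `D*`. -/


theorem composite_stein_fingerprinting {𝒳 V : Type*} [Fintype 𝒳] [Nonempty V]
    (P : V → 𝒳 → ℝ) (P0 : 𝒳 → ℝ)
    (hPnonneg : ∀ u x, 0 ≤ P u x) (hPsum : ∀ u, ∑ x, P u x = 1)
    (hP0pos : ∀ x, 0 < P0 x) (hP0sum : ∑ x, P0 x = 1)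
    (hDpos : 0 < ⨅ u : V, klDivergence (P u) P0)
    (ε : ℝ) (hε : 0 < ε) :
    ∃ A : (n : ℕ) → Set (Fin n → 𝒳),
      (∀ᶠ n in atTop, ∀ u : V, prodPMFProb (P u) ((A n)ᶜ) ≤ ε) ∧
      Tendsto (fun n : ℕ => (1 / (n : ℝ)) * Real.log (prodPMFProb P0 (A n)))
        atTop (nhds (-(⨅ u : V, klDivergence (P u) P0))) := by
  classical
  set D : ℝ := ⨅ u : V, klDivergence (P u) P0 with hD
  have hKLnn : ∀ u, 0 ≤ klDivergence (P u) P0 := fun u =>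
    CS.klDivergence_nonneg (P u) P0 (hPnonneg u) (hPsum u) hP0pos hP0sum
  have hbdd : BddBelow (Set.range fun u => klDivergence (P u) P0) :=
    ⟨0, by rintro y ⟨u, rfl⟩; exact hKLnn u⟩
  have hDle : ∀ u, D ≤ klDivergence (P u) P0 := fun u => ciInf_le hbdd u
  set M : ℝ := ∑ a : 𝒳, (8 + 2 * (Real.log (P0 a))^2) with hM
  set d : ℕ → ℝ := fun n => (n:ℝ) ^ (-(4:ℝ)⁻¹) with hd
  have hd0 : Tendsto d atTop (nhds 0) := by
    rw [hd]
    exact (tendsto_rpow_neg_atTop (by norm_num : (0:ℝ) < (4:ℝ)⁻¹)).comp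
      tendsto_natCast_atTop_atTop
  have hdpos : ∀ n : ℕ, 1 ≤ n → 0 < d n := by
    intro n hn
    have hn0 : (0:ℝ) < n := by exact_mod_cast hn
    rw [hd]
    exact Real.rpow_pos_of_pos hn0 _
  have hrp : ∀ n : ℕ, 1 ≤ n → ((n:ℝ) * M) / ((n:ℝ) * d n)^2 = M * (n:ℝ) ^ (-(2:ℝ)⁻¹) := by
    intro n hn
    have hn0 : (0:ℝ) < n := by exact_mod_cast hn
    have e1 : (d n)^2 = (n:ℝ) ^ (-(2:ℝ)⁻¹) := by
      rw [hd]
      show (((n:ℝ) ^ (-(4:ℝ)⁻¹)))^(2:ℕ) = (n:ℝ) ^ (-(2:ℝ)⁻¹)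
      rw [← Real.rpow_natCast ((n:ℝ) ^ (-(4:ℝ)⁻¹)) 2, ← Real.rpow_mul hn0.le]
      norm_num
    have e2 : ((n:ℝ) * d n)^2 = (n:ℝ)^(2:ℕ) * (n:ℝ) ^ (-(2:ℝ)⁻¹) := by
      rw [mul_pow, e1]
    rw [e2, ← Real.rpow_natCast (n:ℝ) 2, ← Real.rpow_add hn0]
    rw [div_eq_iff (ne_of_gt (Real.rpow_pos_of_pos hn0 _))]
    rw [mul_assoc, ← Real.rpow_add hn0]
    rw [show (-(2:ℝ)⁻¹ + (((2:ℕ):ℝ) + -(2:ℝ)⁻¹)) = 1 by push_cast; ring, Real.rpow_one]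
    ring
  have hMB : Tendsto (fun n : ℕ => M * (n:ℝ) ^ (-(2:ℝ)⁻¹)) atTop (nhds 0) := by
    have h1 : Tendsto (fun n : ℕ => ((n:ℝ)) ^ (-(2:ℝ)⁻¹)) atTop (nhds 0) :=
      (tendsto_rpow_neg_atTop (by norm_num : (0:ℝ) < (2:ℝ)⁻¹)).comp
        tendsto_natCast_atTop_atTop
    simpa using h1.const_mul M
  -- the decision sets
  have missB : ∀ (u : V) (n : ℕ), 1 ≤ n →
      prodPMFProb (P u) ({x : Fin n → 𝒳 | (n:ℝ) * (D - d n) ≤ CS.LL P0 x}ᶜ)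
        ≤ M * (n:ℝ) ^ (-(2:ℝ)⁻¹) := by
    intro u n hn
    have hn0 : (0:ℝ) < n := by exact_mod_cast hn
    have hdn : 0 < d n := hdpos n hn
    have ht : 0 < (n:ℝ) * d n := mul_pos hn0 hdn
    have hsub : {x : Fin n → 𝒳 | (n:ℝ) * (D - d n) ≤ CS.LL P0 x}ᶜ
        ⊆ {x : Fin n → 𝒳 | ¬ ((∀ i, 0 < P u (x i))
            ∧ |(∑ i, CS.fE (P u) P0 (x i)) - n * klDivergence (P u) P0| ≤ (n:ℝ) * d n)} := by
      intro x hx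
      simp only [Set.mem_compl_iff, Set.mem_setOf_eq, not_le] at hx
      simp only [Set.mem_setOf_eq]
      rintro ⟨hpos, hdev⟩
      have h1 : ∑ i, CS.fE (P u) P0 (x i) ≤ CS.LL P0 x :=
        CS.sum_fE_le_LL P0 (P u) hP0pos (hPnonneg u) (hPsum u) x hpos
      have h2 := (abs_le.1 hdev).1
      have h3 : (n:ℝ) * D ≤ n * klDivergence (P u) P0 :=
        mul_le_mul_of_nonneg_left (hDle u) hn0.le
      have e : (n:ℝ) * (D - d n) = n * D - n * d n := by ring
      linarith
    calc prodPMFProb (P u) ({x : Fin n → 𝒳 | (n:ℝ) * (D - d n) ≤ CS.LL P0 x}ᶜ)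
        ≤ prodPMFProb (P u) {x : Fin n → 𝒳 | ¬ ((∀ i, 0 < P u (x i))
            ∧ |(∑ i, CS.fE (P u) P0 (x i)) - n * klDivergence (P u) P0| ≤ (n:ℝ) * d n)} :=
          CS.prodPMFProb_mono (hPnonneg u) hsub
      _ ≤ ((n : ℝ) * ∑ a, P u a * (CS.fE (P u) P0 a - klDivergence (P u) P0)^2)
            / ((n:ℝ) * d n)^2 :=
          CS.tail_bound (P u) P0 (hPnonneg u) (hPsum u) n ((n:ℝ) * d n) ht
      _ ≤ ((n:ℝ) * M) / ((n:ℝ) * d n)^2 := by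
          refine (div_le_div_iff_of_pos_right (by positivity : (0:ℝ) < ((n:ℝ) * d n)^2)).2 ?_
          refine mul_le_mul_of_nonneg_left ?_ hn0.le
          rw [hM]
          exact CS.var_fE_le (P u) P0 (hPnonneg u) (hPsum u) hP0pos _ (CS.mean_fE (P u) P0)
      _ = M * (n:ℝ) ^ (-(2:ℝ)⁻¹) := hrp n hn
  have UB : ∀ n : ℕ, 1 ≤ n →
      prodPMFProb P0 {x : Fin n → 𝒳 | (n:ℝ) * (D - d n) ≤ CS.LL P0 x}
        ≤ ((n:ℝ) + 1) ^ (Fintype.card 𝒳) * Real.exp (-((n:ℝ) * (D - d n))) := by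
    intro n hn
    rw [CS.prodPMFProb_eq]
    calc ∑ x : Fin n → 𝒳, (if x ∈ {x : Fin n → 𝒳 | (n:ℝ) * (D - d n) ≤ CS.LL P0 x}
            then ∏ i, P0 (x i) else 0)
        ≤ ∑ x : Fin n → 𝒳, Real.exp (-((n:ℝ) * (D - d n)))
            * ∏ a, ((CS.cnt x a : ℝ) / n) ^ (CS.cnt x a) := by
          refine Finset.sum_le_sum fun x _ => ?_
          have hΦ : (0:ℝ) ≤ ∏ a, ((CS.cnt x a : ℝ) / n) ^ (CS.cnt x a) :=
            Finset.prod_nonneg fun a _ => by positivity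
          by_cases hx : x ∈ {x : Fin n → 𝒳 | (n:ℝ) * (D - d n) ≤ CS.LL P0 x}
          · rw [if_pos hx, CS.prod_P0_eq P0 hP0pos x]
            exact mul_le_mul_of_nonneg_right (Real.exp_le_exp.2 (neg_le_neg hx)) hΦ
          · rw [if_neg hx]
            exact mul_nonneg (Real.exp_pos _).le hΦ
      _ = Real.exp (-((n:ℝ) * (D - d n)))
            * ∑ x : Fin n → 𝒳, ∏ a, ((CS.cnt x a : ℝ) / n) ^ (CS.cnt x a) := by
          rw [Finset.mul_sum]
      _ ≤ Real.exp (-((n:ℝ) * (D - d n))) * (((n:ℝ) + 1) ^ (Fintype.card 𝒳)) :=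
          mul_le_mul_of_nonneg_left (CS.count_sum_le hn) (Real.exp_pos _).le
      _ = ((n:ℝ) + 1) ^ (Fintype.card 𝒳) * Real.exp (-((n:ℝ) * (D - d n))) := mul_comm _ _
  refine ⟨fun n => {x : Fin n → 𝒳 | (n:ℝ) * (D - d n) ≤ CS.LL P0 x}, ?_, ?_⟩
  · -- uniform missed-detection bound
    have hev : ∀ᶠ n : ℕ in atTop, M * (n:ℝ) ^ (-(2:ℝ)⁻¹) < ε := hMB.eventually_lt_const hε
    filter_upwards [eventually_ge_atTop 1, hev] with n hn1 hevn u
    exact (missB u n hn1).trans hevn.le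
  · -- exponential decay with exact exponent
    have tlog : Tendsto (fun n : ℕ => Real.log ((n:ℝ)+1) / (n:ℝ)) atTop (nhds 0) := by
      have t1 : Tendsto (fun x : ℝ => Real.log x / x) atTop (nhds 0) := by
        simpa using Real.isLittleO_log_id_atTop.tendsto_div_nhds_zero
      have t2 : Tendsto (fun n : ℕ => (n:ℝ) + 1) atTop atTop :=
        tendsto_atTop_add_const_right _ 1 tendsto_natCast_atTop_atTop
      have t3 : Tendsto (fun n : ℕ => Real.log ((n:ℝ)+1) / ((n:ℝ)+1)) atTop (nhds 0) :=
        t1.comp t2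
      have t4 : Tendsto (fun n : ℕ => ((n:ℝ)+1) / (n:ℝ)) atTop (nhds 1) := by
        have t5 : Tendsto (fun n : ℕ => 1 + 1/(n:ℝ)) atTop (nhds (1 + 0)) :=
          tendsto_const_nhds.add tendsto_one_div_atTop_nhds_zero_nat
        rw [add_zero] at t5
        refine t5.congr' ?_
        filter_upwards [eventually_ge_atTop 1] with n hn
        have hn0 : (n:ℝ) ≠ 0 := Nat.cast_ne_zero.2 (by omega)
        field_simp
      have t6 := t3.mul t4
      rw [zero_mul] at t6
      refine t6.congr' ?_
      filter_upwards [eventually_ge_atTop 1] with n hn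
      have hn0 : (n:ℝ) ≠ 0 := Nat.cast_ne_zero.2 (by omega)
      have hn1 : ((n:ℝ) + 1) ≠ 0 := by positivity
      field_simp
    refine Metric.tendsto_nhds.2 fun ε' hε' => ?_
    obtain ⟨u0, hu0⟩ : ∃ u : V, klDivergence (P u) P0 < D + ε'/2 := by
      refine exists_lt_of_ciInf_lt ?_
      rw [← hD]
      linarith
    -- the lower bound on the false-alarm probability
    have hLBkey : ∀ n : ℕ, 1 ≤ n → M * (n:ℝ) ^ (-(2:ℝ)⁻¹) ≤ 1/2 →
        (1/2) * Real.exp (-((n:ℝ) * (klDivergence (P u0) P0 + d n)))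
          ≤ prodPMFProb P0 {x : Fin n → 𝒳 | (n:ℝ) * (D - d n) ≤ CS.LL P0 x} := by
      intro n hn hhalf
      have hn0 : (0:ℝ) < n := by exact_mod_cast hn
      have hdn : 0 < d n := hdpos n hn
      have ht : 0 < (n:ℝ) * d n := mul_pos hn0 hdn
      set B : Set (Fin n → 𝒳) := {x | (∀ i, 0 < P u0 (x i))
        ∧ |(∑ i, CS.fE (P u0) P0 (x i)) - n * klDivergence (P u0) P0| ≤ (n:ℝ) * d n} with hB
      have hBA : B ⊆ {x : Fin n → 𝒳 | (n:ℝ) * (D - d n) ≤ CS.LL P0 x} := by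
        rintro x ⟨hpos, hdev⟩
        have h1 : ∑ i, CS.fE (P u0) P0 (x i) ≤ CS.LL P0 x :=
          CS.sum_fE_le_LL P0 (P u0) hP0pos (hPnonneg u0) (hPsum u0) x hpos
        have h2 := (abs_le.1 hdev).1
        have h3 : (n:ℝ) * D ≤ n * klDivergence (P u0) P0 :=
          mul_le_mul_of_nonneg_left (hDle u0) hn0.le
        show (n:ℝ) * (D - d n) ≤ CS.LL P0 x
        have e : (n:ℝ) * (D - d n) = n * D - n * d n := by ring
        linarith
      have hQB : 1/2 ≤ prodPMFProb (P u0) B := by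
        have hcompl : prodPMFProb (P u0) Bᶜ ≤ M * (n:ℝ) ^ (-(2:ℝ)⁻¹) := by
          have hBc : Bᶜ = {x : Fin n → 𝒳 | ¬ ((∀ i, 0 < P u0 (x i))
              ∧ |(∑ i, CS.fE (P u0) P0 (x i)) - n * klDivergence (P u0) P0|
                ≤ (n:ℝ) * d n)} := by
            rw [hB, Set.compl_setOf]
          rw [hBc]
          calc prodPMFProb (P u0) {x : Fin n → 𝒳 | ¬ ((∀ i, 0 < P u0 (x i))
              ∧ |(∑ i, CS.fE (P u0) P0 (x i)) - n * klDivergence (P u0) P0|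
                ≤ (n:ℝ) * d n)}
              ≤ ((n : ℝ) * ∑ a, P u0 a * (CS.fE (P u0) P0 a - klDivergence (P u0) P0)^2)
                  / ((n:ℝ) * d n)^2 :=
                CS.tail_bound (P u0) P0 (hPnonneg u0) (hPsum u0) n ((n:ℝ) * d n) ht
            _ ≤ ((n:ℝ) * M) / ((n:ℝ) * d n)^2 := by
                refine (div_le_div_iff_of_pos_right (by positivity : (0:ℝ) < ((n:ℝ) * d n)^2)).2 ?_
                refine mul_le_mul_of_nonneg_left ?_ hn0.le
                rw [hM]
                exact CS.var_fE_le (P u0) P0 (hPnonneg u0) (hPsum u0) hP0pos _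
                  (CS.mean_fE (P u0) P0)
            _ = M * (n:ℝ) ^ (-(2:ℝ)⁻¹) := hrp n hn
        have heq := CS.prodPMFProb_compl (hPnonneg u0) (hPsum u0) B
        linarith
      have hPB : Real.exp (-((n:ℝ) * (klDivergence (P u0) P0 + d n))) * prodPMFProb (P u0) B
          ≤ prodPMFProb P0 B := by
        rw [CS.prodPMFProb_eq, CS.prodPMFProb_eq, Finset.mul_sum]
        refine Finset.sum_le_sum fun x _ => ?_
        by_cases hx : x ∈ B
        · rw [if_pos hx, if_pos hx]
          obtain ⟨hpos, hdev⟩ := hx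
          rw [CS.prod_P0_change P0 (P u0) hP0pos x hpos]
          have h4 := (abs_le.1 hdev).2
          have h5 : Real.exp (-((n:ℝ) * (klDivergence (P u0) P0 + d n)))
              ≤ Real.exp (-(∑ i, CS.fE (P u0) P0 (x i))) := by
            apply Real.exp_le_exp.2
            have e : (n:ℝ) * (klDivergence (P u0) P0 + d n)
                = n * klDivergence (P u0) P0 + n * d n := by ring
            linarith
          have hQnn : (0:ℝ) ≤ ∏ i, P u0 (x i) :=
            Finset.prod_nonneg fun i _ => hPnonneg u0 _
          calc Real.exp (-((n:ℝ) * (klDivergence (P u0) P0 + d n))) * ∏ i, P u0 (x i)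
              ≤ Real.exp (-(∑ i, CS.fE (P u0) P0 (x i))) * ∏ i, P u0 (x i) :=
                mul_le_mul_of_nonneg_right h5 hQnn
            _ = (∏ i, P u0 (x i)) * Real.exp (-(∑ i, CS.fE (P u0) P0 (x i))) := mul_comm _ _
        · rw [if_neg hx, if_neg hx, mul_zero]
      calc (1/2) * Real.exp (-((n:ℝ) * (klDivergence (P u0) P0 + d n)))
          ≤ prodPMFProb (P u0) B * Real.exp (-((n:ℝ) * (klDivergence (P u0) P0 + d n))) :=
            mul_le_mul_of_nonneg_right hQB (Real.exp_pos _).le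
        _ = Real.exp (-((n:ℝ) * (klDivergence (P u0) P0 + d n))) * prodPMFProb (P u0) B :=
            mul_comm _ _
        _ ≤ prodPMFProb P0 B := hPB
        _ ≤ prodPMFProb P0 {x : Fin n → 𝒳 | (n:ℝ) * (D - d n) ≤ CS.LL P0 x} :=
            CS.prodPMFProb_mono (fun a => (hP0pos a).le) hBA
    -- limiting sequences
    have hUtend : Tendsto (fun n : ℕ => (Fintype.card 𝒳 : ℝ) * (Real.log ((n:ℝ)+1) / (n:ℝ))
        - (D - d n)) atTop (nhds (-D)) := by
      have := (tlog.const_mul ((Fintype.card 𝒳 : ℝ))).sub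
        ((tendsto_const_nhds : Tendsto (fun _ : ℕ => D) atTop (nhds D)).sub hd0)
      simpa using this
    have hLtend : Tendsto (fun n : ℕ => Real.log (1/2) / (n:ℝ)
        - (klDivergence (P u0) P0 + d n)) atTop (nhds (-(klDivergence (P u0) P0))) := by
      have t7 : Tendsto (fun n : ℕ => Real.log (1/2) / (n:ℝ)) atTop (nhds 0) := by
        have h8 : Tendsto (fun n : ℕ => Real.log (1/2) * (1/(n:ℝ))) atTop
            (nhds (Real.log (1/2) * 0)) :=
          tendsto_one_div_atTop_nhds_zero_nat.const_mul (Real.log (1/2))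
        rw [mul_zero] at h8
        refine h8.congr fun n => ?_
        rw [mul_one_div]
      have := t7.sub ((tendsto_const_nhds :
        Tendsto (fun _ : ℕ => klDivergence (P u0) P0) atTop (nhds (klDivergence (P u0) P0))).add
          hd0)
      simpa using this
    have evhalf : ∀ᶠ n : ℕ in atTop, M * (n:ℝ) ^ (-(2:ℝ)⁻¹) ≤ 1/2 :=
      (hMB.eventually_lt_const (by norm_num : (0:ℝ) < 1/2)).mono fun n h => h.le
    have evU : ∀ᶠ n : ℕ in atTop, (Fintype.card 𝒳 : ℝ) * (Real.log ((n:ℝ)+1) / (n:ℝ))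
        - (D - d n) < -D + ε' := hUtend.eventually_lt_const (by linarith)
    have evL : ∀ᶠ n : ℕ in atTop, -D - ε' < Real.log (1/2) / (n:ℝ)
        - (klDivergence (P u0) P0 + d n) :=
      hLtend.eventually_const_lt (by linarith)
    filter_upwards [eventually_ge_atTop 1, evhalf, evU, evL] with n hn1 hhalf hUlt hLlt
    have hn0 : (0:ℝ) < n := by exact_mod_cast hn1
    have hLBn := hLBkey n hn1 hhalf
    have hpos : 0 < prodPMFProb P0 {x : Fin n → 𝒳 | (n:ℝ) * (D - d n) ≤ CS.LL P0 x} :=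
      lt_of_lt_of_le (by positivity) hLBn
    have hUBn := UB n hn1
    have hlogU : Real.log (prodPMFProb P0 {x : Fin n → 𝒳 | (n:ℝ) * (D - d n) ≤ CS.LL P0 x})
        ≤ (Fintype.card 𝒳 : ℝ) * Real.log ((n:ℝ)+1) + (-((n:ℝ) * (D - d n))) := by
      have h := Real.log_le_log hpos hUBn
      rwa [Real.log_mul (pow_ne_zero _ (by positivity)) (Real.exp_ne_zero _),
        Real.log_pow, Real.log_exp] at h
    have hlogL : Real.log (1/2) + (-((n:ℝ) * (klDivergence (P u0) P0 + d n)))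
        ≤ Real.log (prodPMFProb P0 {x : Fin n → 𝒳 | (n:ℝ) * (D - d n) ≤ CS.LL P0 x}) := by
      have h := Real.log_le_log (by positivity) hLBn
      rwa [Real.log_mul (by norm_num) (Real.exp_ne_zero _), Real.log_exp] at h
    have hgU : (1/(n:ℝ)) * Real.log (prodPMFProb P0
        {x : Fin n → 𝒳 | (n:ℝ) * (D - d n) ≤ CS.LL P0 x})
        ≤ (Fintype.card 𝒳 : ℝ) * (Real.log ((n:ℝ)+1) / (n:ℝ)) - (D - d n) := by
      have h := mul_le_mul_of_nonneg_left hlogU (by positivity : (0:ℝ) ≤ 1/(n:ℝ))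
      calc (1/(n:ℝ)) * Real.log (prodPMFProb P0
            {x : Fin n → 𝒳 | (n:ℝ) * (D - d n) ≤ CS.LL P0 x})
          ≤ (1/(n:ℝ)) * ((Fintype.card 𝒳 : ℝ) * Real.log ((n:ℝ)+1)
              + (-((n:ℝ) * (D - d n)))) := h
        _ = (Fintype.card 𝒳 : ℝ) * (Real.log ((n:ℝ)+1) / (n:ℝ)) - (D - d n) := by
            field_simp
            ring
    have hgL : Real.log (1/2) / (n:ℝ) - (klDivergence (P u0) P0 + d n)
        ≤ (1/(n:ℝ)) * Real.log (prodPMFProb P0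
            {x : Fin n → 𝒳 | (n:ℝ) * (D - d n) ≤ CS.LL P0 x}) := by
      have h := mul_le_mul_of_nonneg_left hlogL (by positivity : (0:ℝ) ≤ 1/(n:ℝ))
      calc Real.log (1/2) / (n:ℝ) - (klDivergence (P u0) P0 + d n)
          = (1/(n:ℝ)) * (Real.log (1/2) + (-((n:ℝ) * (klDivergence (P u0) P0 + d n)))) := by
            field_simp
            ring
        _ ≤ _ := h
    rw [Real.dist_eq, abs_sub_lt_iff]
    constructor
    · linarith
    · linarith
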